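/- arXiv:1511.02572 — 4 statements merged into one kernel-verified Lean document; each statement's English description precedes it below -/
import Mathlib

section
/- Let φ : ℝ^{n+1} → ℝ be a C² nonnegative function with |∇φ(x)| ≤ j φ(x) and ‖∇²φ(x)‖ ≤ j φ(x) for all x, where j > 0. Then for all x, y ∈ ℝ^{n+1}, |φ(x) − φ(y) − ∇φ(y)·(x − y)| ≤ j |x − y|² φ(y) exp(j |x − y|). -/
/-!
Along the segment from `y` to `x`, the bound `|∇φ| ≤ j φ` is a linear differential inequality,
so Gronwall gives `φ z ≤ φ y exp (j ‖z - y‖)`. Hence the Hessian is bounded by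
`j φ y exp (j ‖x - y‖)` on the segment, and the first-order Taylor remainder is at most that
bound times `‖x - y‖²` by the mean value inequality applied twice.
-/

open Set

variable {E : Type*} [NormedAddCommGroup E] [NormedSpace ℝ E]

lemma le_mul_exp_of_norm_fderiv_le {f : E → ℝ} {j : ℝ} (hf : Differentiable ℝ f)
    (hnonneg : ∀ x, 0 ≤ f x) (hbound : ∀ x, ‖fderiv ℝ f x‖ ≤ j * f x) (a b : E) :
    f b ≤ f a * Real.exp (j * ‖b - a‖) := by
  let γ : ℝ → E := fun t => a + t • (b - a)
  have hγ : ∀ t, HasDerivAt (f ∘ γ) (fderiv ℝ f (γ t) (b - a)) t := fun t =>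
    (hf (γ t)).hasFDerivAt.comp_hasDerivAt t
      (by simpa only [one_smul] using ((hasDerivAt_id' t).smul_const (b - a)).const_add a)
  have hgronwall := norm_le_gronwallBound_of_norm_deriv_right_le (δ := f a)
    (K := j * ‖b - a‖) (ε := 0) (a := 0) (b := 1)
    (fun t _ => (hγ t).continuousAt.continuousWithinAt) (fun t _ => (hγ t).hasDerivWithinAt)
    (by simp [γ, abs_of_nonneg (hnonneg a)])
    (fun t _ => calc
      ‖fderiv ℝ f (γ t) (b - a)‖ ≤ ‖fderiv ℝ f (γ t)‖ * ‖b - a‖ :=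
        ContinuousLinearMap.le_opNorm _ _
      _ ≤ j * f (γ t) * ‖b - a‖ := by gcongr; exact hbound _
      _ = j * ‖b - a‖ * ‖(f ∘ γ) t‖ + 0 := by
        rw [Function.comp_apply, Real.norm_of_nonneg (hnonneg _)]; ring)
    1 (right_mem_Icc.2 zero_le_one)
  simpa [γ, gronwallBound_ε0, abs_of_nonneg (hnonneg b)] using hgronwall

lemma norm_sub_sub_fderiv_le_of_norm_fderiv_fderiv_le {F : Type*} [NormedAddCommGroup F]
    [NormedSpace ℝ F] {f : E → F} {M : ℝ} {x y : E} (hf : Differentiable ℝ f)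
    (hf' : Differentiable ℝ (fderiv ℝ f))
    (hM : ∀ z ∈ segment ℝ y x, ‖fderiv ℝ (fderiv ℝ f) z‖ ≤ M) :
    ‖f x - f y - fderiv ℝ f y (x - y)‖ ≤ M * ‖x - y‖ ^ 2 := by
  have hM0 : 0 ≤ M :=
    (norm_nonneg (fderiv ℝ (fderiv ℝ f) y)).trans (hM y (left_mem_segment ℝ y x))
  have hlip : ∀ z ∈ segment ℝ y x, ‖fderiv ℝ f z - fderiv ℝ f y‖ ≤ M * ‖x - y‖ := by
    intro z hz
    calc ‖fderiv ℝ f z - fderiv ℝ f y‖ ≤ M * ‖z - y‖ :=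
          (convex_segment y x).norm_image_sub_le_of_norm_fderiv_le (fun w _ => hf' w) hM
            (left_mem_segment ℝ y x) hz
      _ ≤ M * ‖x - y‖ := by gcongr; exact norm_sub_le_of_mem_segment hz
  calc ‖f x - f y - fderiv ℝ f y (x - y)‖ ≤ M * ‖x - y‖ * ‖x - y‖ :=
        (convex_segment y x).norm_image_sub_le_of_norm_fderiv_le' (fun w _ => hf w) hlip
          (left_mem_segment ℝ y x) (right_mem_segment ℝ y x)
    _ = M * ‖x - y‖ ^ 2 := by ring

lemma norm_fderiv_fderiv_eq_norm_iteratedFDeriv_two {F : Type*} [NormedAddCommGroup F]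
    [NormedSpace ℝ F] (f : E → F) (x : E) :
    ‖fderiv ℝ (fderiv ℝ f) x‖ = ‖iteratedFDeriv ℝ 2 f x‖ := by
  rw [← norm_iteratedFDeriv_zero (𝕜 := ℝ) (f := fderiv ℝ (fderiv ℝ f)),
    norm_iteratedFDeriv_fderiv, norm_iteratedFDeriv_fderiv]

/-- For a nonnegative `C²` function `φ` with `|∇φ| ≤ j φ` and `‖∇²φ‖ ≤ j φ` everywhere
(`j > 0`), one has the second order Taylor estimate
`|φ(x) − φ(y) − ∇φ(y)·(x − y)| ≤ j |x − y|² φ(y) exp(j |x − y|)`. -/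
theorem stmt_2 {n : ℕ} (φ : EuclideanSpace ℝ (Fin (n+1)) → ℝ) (j : ℝ)
    (hj : 0 < j) (hφ : ContDiff ℝ 2 φ) (hnonneg : ∀ x, 0 ≤ φ x)
    (hgrad : ∀ x, ‖gradient φ x‖ ≤ j * φ x)
    (hhess : ∀ x, ‖iteratedFDeriv ℝ 2 φ x‖ ≤ j * φ x) :
    ∀ x y : EuclideanSpace ℝ (Fin (n+1)),
      |φ x - φ y - fderiv ℝ φ y (x - y)| ≤ j * dist x y ^ 2 * φ y * Real.exp (j * dist x y) := by
  intro x y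
  have hdiff : Differentiable ℝ φ := hφ.differentiable two_ne_zero
  have hdiff' : Differentiable ℝ (fderiv ℝ φ) :=
    (hφ.fderiv_right (m := 1) le_rfl).differentiable one_ne_zero
  have hgrowth : ∀ z, φ z ≤ φ y * Real.exp (j * ‖z - y‖) :=
    le_mul_exp_of_norm_fderiv_le hdiff hnonneg
      (fun z => by simpa [gradient] using hgrad z) y
  have hhess_seg : ∀ z ∈ segment ℝ y x,
      ‖fderiv ℝ (fderiv ℝ φ) z‖ ≤ j * φ y * Real.exp (j * ‖x - y‖) := by
    intro z hz
    rw [norm_fderiv_fderiv_eq_norm_iteratedFDeriv_two]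
    calc ‖iteratedFDeriv ℝ 2 φ z‖ ≤ j * φ z := hhess z
      _ ≤ j * (φ y * Real.exp (j * ‖z - y‖)) := by gcongr; exact hgrowth z
      _ ≤ j * φ y * Real.exp (j * ‖x - y‖) := by
        rw [← mul_assoc]; gcongr
        · exact mul_nonneg hj.le (hnonneg y)
        · exact norm_sub_le_of_mem_segment hz
  rw [← Real.norm_eq_abs, dist_eq_norm]
  calc ‖φ x - φ y - fderiv ℝ φ y (x - y)‖
      ≤ j * φ y * Real.exp (j * ‖x - y‖) * ‖x - y‖ ^ 2 :=
        norm_sub_sub_fderiv_le_of_norm_fderiv_fderiv_le hdiff hdiff' hhess_seg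
    _ = _ := by ring
end

section
/- Let ν : (0,∞) → (0,∞) be monotone increasing and differentiable almost everywhere, with R > 0 and a measurable set A ⊆ [R/2, R] with Lebesgue measure L¹(A) ≥ R/4, such that for a.e. r ∈ A one has (1/2) ν(r) ≤ C (ν'(r))^{n/(n−1)} for a constant C > 0 and integer n ≥ 2. Then ν(R)^{1/n} ≥ n^{-1} (2C)^{(1−n)/n} R/4. -/
open MeasureTheory Set

/-! The function `g = ν^{1/n}` is monotone, and the differential inequality together with the
chain rule `g' = n⁻¹ ν^{1/n - 1} ν'` gives `g' ≥ n⁻¹ (2C)^{(1-n)/n}` a.e. on `A`. For a monotone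
function, the integral of `g'` over `A` is the measure of `g '' A`, which lies in
`[g (R/2), g R]`; hence `n⁻¹ (2C)^{(1-n)/n} · |A| ≤ g R`. -/

theorem exists_measurableSet_subset_forall_of_ae_restrict {α : Type*} [MeasurableSpace α]
    {μ : Measure α} {s : Set α} {p : α → Prop} (hs : MeasurableSet s)
    (hp : ∀ᵐ x ∂μ.restrict s, p x) :
    ∃ t ⊆ s, MeasurableSet t ∧ μ t = μ s ∧ ∀ x ∈ t, p x := by
  have hae : {x | x ∈ s ∧ p x} =ᵐ[μ] s := by
    filter_upwards [(ae_restrict_iff' hs).1 hp] with x hx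
    exact propext ⟨And.left, fun hxs => ⟨hxs, hx hxs⟩⟩
  obtain ⟨t, hts, htm, hteq⟩ :=
    (hs.nullMeasurableSet.congr hae.symm).exists_measurable_subset_ae_eq
  exact ⟨t, fun x hx => (hts hx).1, htm, measure_congr (hteq.trans hae), fun x hx => (hts hx).2⟩

theorem MonotoneOn.ofReal_mul_volume_le_of_le_deriv {f : ℝ → ℝ} {a b c : ℝ} {s : Set ℝ}
    (hf : MonotoneOn f (Icc a b)) (hs : MeasurableSet s) (hsub : s ⊆ Icc a b)
    (h : ∀ᵐ x ∂volume.restrict s, DifferentiableAt ℝ f x ∧ c ≤ deriv f x) :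
    ENNReal.ofReal c * volume s ≤ ENNReal.ofReal (f b - f a) := by
  obtain ⟨t, hts, htm, hvol, ht⟩ := exists_measurableSet_subset_forall_of_ae_restrict hs h
  calc ENNReal.ofReal c * volume s = ∫⁻ _ in t, ENNReal.ofReal c := by
        rw [setLIntegral_const, hvol]
    _ ≤ ∫⁻ x in t, ENNReal.ofReal (deriv f x) :=
        setLIntegral_mono' htm fun x hx => ENNReal.ofReal_le_ofReal (ht x hx).2
    _ = volume (f '' t) := lintegral_deriv_eq_volume_image_of_monotoneOn htm
        (fun x hx => (ht x hx).1.hasDerivAt.hasDerivWithinAt) (hf.mono (hts.trans hsub))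
    _ ≤ volume (Icc (f a) (f b)) :=
        measure_mono ((image_mono (hts.trans hsub)).trans hf.image_Icc_subset)
    _ = ENNReal.ofReal (f b - f a) := Real.volume_Icc

theorem Real.rpow_inv_le_of_le_mul_rpow {v d K r : ℝ} (hv : 0 ≤ v) (hd : 0 ≤ d) (hK : 0 < K)
    (hr : 0 < r) (h : v ≤ K * d ^ r) : (v / K) ^ r⁻¹ ≤ d :=
  (Real.rpow_inv_le_iff_of_pos (div_nonneg hv hK.le) hd hr).2 ((div_le_iff₀' hK).2 h)

theorem inv_mul_rpow_le_deriv_rpow_one_div {ν : ℝ → ℝ} {x C p : ℝ} (hp : 1 < p) (hC : 0 < C)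
    (hνx : 0 < ν x) (hdiff : DifferentiableAt ℝ ν x) (hν' : 0 ≤ deriv ν x)
    (h : ν x / 2 ≤ C * deriv ν x ^ (p / (p - 1))) :
    p⁻¹ * (2 * C) ^ ((1 - p) / p) ≤ deriv (fun y => ν y ^ (1 / p)) x := by
  have hp0 : 0 < p := by linarith
  have h2C : 0 < 2 * C := by linarith
  have hlow : (ν x / (2 * C)) ^ ((p - 1) / p) ≤ deriv ν x := by
    rw [← inv_div p (p - 1)]
    exact Real.rpow_inv_le_of_le_mul_rpow hνx.le hν' h2C (by positivity) (by linarith)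
  rw [(hdiff.hasDerivAt.rpow_const (Or.inl hνx.ne')).deriv]
  calc p⁻¹ * (2 * C) ^ ((1 - p) / p)
      = (ν x / (2 * C)) ^ ((p - 1) / p) * (1 / p) * ν x ^ (1 / p - 1) := by
        rw [Real.div_rpow hνx.le h2C.le, show (1 - p) / p = -((p - 1) / p) by ring,
          Real.rpow_neg h2C.le]
        have : ν x ^ ((p - 1) / p) * ν x ^ (1 / p - 1) = 1 := by
          rw [← Real.rpow_add hνx, show (p - 1) / p + (1 / p - 1) = 0 by field_simp; ring,
            Real.rpow_zero]
        linear_combination (-(p⁻¹ * ((2 * C) ^ ((p - 1) / p))⁻¹)) * this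
    _ ≤ deriv ν x * (1 / p) * ν x ^ (1 / p - 1) := by gcongr

theorem stmt_8_general (n : ℕ) (hn : 2 ≤ n) (C R : ℝ) (hC : 0 < C) (hR : 0 < R)
    (ν : ℝ → ℝ) (hνpos : ∀ r, 0 < r → 0 < ν r) (hmono : MonotoneOn ν (Set.Ioi 0))
    (A : Set ℝ) (hA : A ⊆ Set.Icc (R/2) R) (hAm : MeasurableSet A)
    (hAvol : ENNReal.ofReal (R/4) ≤ volume A)
    (hineq : ∀ᵐ r ∂(volume.restrict A),
      DifferentiableAt ℝ ν r ∧ ν r / 2 ≤ C * (deriv ν r) ^ ((n:ℝ)/((n:ℝ)-1))) :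
    (n:ℝ)⁻¹ * (2*C) ^ ((1-(n:ℝ))/(n:ℝ)) * (R/4) ≤ ν R ^ ((1:ℝ)/(n:ℝ)) := by
  have hn1 : (1 : ℝ) < n := by exact_mod_cast hn
  set c := (n:ℝ)⁻¹ * (2*C) ^ ((1-(n:ℝ))/(n:ℝ))
  set g : ℝ → ℝ := fun y => ν y ^ ((1:ℝ)/(n:ℝ))
  have hpos : ∀ x ∈ Icc (R/2) R, 0 < x := fun x hx => by linarith [hx.1]
  have hg : MonotoneOn g (Icc (R/2) R) := fun x hx y hy hxy =>
    Real.rpow_le_rpow (hνpos x (hpos x hx)).le (hmono (hpos x hx) (hpos y hy) hxy) (by positivity)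
  have hg' : ∀ᵐ x ∂volume.restrict A, DifferentiableAt ℝ g x ∧ c ≤ deriv g x := by
    filter_upwards [hineq, ae_restrict_mem hAm] with x ⟨hdiff, hx⟩ hxA
    have hx0 := hpos x (hA hxA)
    have hν' : 0 ≤ deriv ν x := hdiff.hasDerivAt.hasDerivWithinAt.nonneg_of_monotoneOn
      (isOpen_Ioi.uniqueDiffWithinAt (𝕜 := ℝ) hx0).accPt hmono
    exact ⟨hdiff.rpow_const (Or.inl (hνpos x hx0).ne'),
      inv_mul_rpow_le_deriv_rpow_one_div hn1 hC (hνpos x hx0) hdiff hν' hx⟩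
  have hg_nonneg : 0 ≤ g (R/2) := Real.rpow_nonneg (hνpos _ (by positivity)).le _
  rw [← ENNReal.ofReal_le_ofReal_iff (Real.rpow_nonneg (hνpos R hR).le _)]
  calc ENNReal.ofReal (c * (R/4)) = ENNReal.ofReal c * ENNReal.ofReal (R/4) :=
        ENNReal.ofReal_mul (by positivity)
    _ ≤ ENNReal.ofReal c * volume A := by gcongr
    _ ≤ ENNReal.ofReal (g R - g (R/2)) := hg.ofReal_mul_volume_le_of_le_deriv hAm hA hg'
    _ ≤ ENNReal.ofReal (g R) := ENNReal.ofReal_le_ofReal (sub_le_self _ hg_nonneg)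

/-- If `ν : (0,∞) → (0,∞)` is monotone increasing and a.e. differentiable, and on a
measurable set `A ⊆ [R/2, R]` with `L¹(A) ≥ R/4` one has the differential inequality
`ν(r)/2 ≤ C (ν'(r))^{n/(n−1)}` a.e., then `ν(R)^{1/n} ≥ n⁻¹ (2C)^{(1−n)/n} R/4`. -/
theorem stmt_8 (n : ℕ) (hn : 2 ≤ n) (C R : ℝ) (hC : 0 < C) (hR : 0 < R)
    (ν : ℝ → ℝ) (hνpos : ∀ r, 0 < r → 0 < ν r) (hmono : MonotoneOn ν (Set.Ioi 0))
    (hdiffae : ∀ᵐ r ∂(volume.restrict (Set.Ioi (0:ℝ))), DifferentiableAt ℝ ν r)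
    (A : Set ℝ) (hA : A ⊆ Set.Icc (R/2) R) (hAm : MeasurableSet A)
    (hAvol : ENNReal.ofReal (R/4) ≤ volume A)
    (hineq : ∀ᵐ r ∂(volume.restrict A),
      DifferentiableAt ℝ ν r ∧ ν r / 2 ≤ C * (deriv ν r) ^ ((n:ℝ)/((n:ℝ)-1))) :
    (n:ℝ)⁻¹ * (2*C) ^ ((1-(n:ℝ))/(n:ℝ)) * (R/4) ≤ ν R ^ ((1:ℝ)/(n:ℝ)) :=
  stmt_8_general n hn C R hC hR ν hνpos hmono A hA hAm hAvol hineq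
end

section
/- Let E₁, …, E_N ⊆ ℝ^{n+1} be mutually disjoint open sets whose union has full Lebesgue measure in the open ball U_R, and suppose each satisfies the relative isoperimetric inequality min{L^{n+1}(U_R ∩ E), L^{n+1}(U_R \ E)} ≤ C (H^n(U_R ∩ ∂E))^{(n+1)/n}, as well as every finite union Ê of the E_i's (with perimeter of Ê in U_R bounded by H^n(U_R ∩ ∪_i ∂E_i)). If H^n(U_R ∩ ∪_{i=1}^N ∂E_i) ≤ (L^{n+1}(U_R)/(2^{n+2} C))^{n/(n+1)}, then there exists a unique index i₀ such that L^{n+1}(U_R \ E_{i₀}) ≤ C (H^n(U_R ∩ ∪_i ∂E_i))^{(n+1)/n} ≤ 2^{-(n+2)} L^{n+1}(U_R). -/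
open MeasureTheory

/-!
Write `V = |U_R|` and `K = C B^{(n+1)/n}`; the smallness of `B` gives `3K < V`. By the relative
isoperimetric inequality every finite union `Ê` of the `E_i` is either small (`|U_R ∩ Ê| ≤ K`) or
large (`|U_R ∩ Ê| ≥ V - K`). Adding the sets one at a time, starting from the small empty union
and ending with the large full union, some `E_{i₀}` turns a small union into a large one, so
`|U_R ∩ E_{i₀}| ≥ V - 2K > K`; the inequality for `E_{i₀}` alone then forces `|U_R \ E_{i₀}| ≤ K`.
Any other `E_j` misses `U_R ∩ E_{i₀}`, so `|U_R \ E_j| > K`.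
-/

section Isoperimetric

variable {α ι : Type*} [MeasurableSpace α] {μ : Measure α} {U A : Set α} {E : ι → Set α} {K : ℝ}

lemma measureReal_le_inter_add_sdiff (μ : Measure α) (U A : Set α) :
    μ.real U ≤ μ.real (U ∩ A) + μ.real (U \ A) := by
  conv_lhs => rw [← Set.inter_union_sdiff U A]
  exact measureReal_union_le _ _

lemma measureReal_inter_le_or_sub_le_of_min_le
    (h : min (μ.real (U ∩ A)) (μ.real (U \ A)) ≤ K) :
    μ.real (U ∩ A) ≤ K ∨ μ.real U - K ≤ μ.real (U ∩ A) := by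
  rcases min_le_iff.mp h with h | h
  · exact .inl h
  · exact .inr (by linarith [measureReal_le_inter_add_sdiff μ U A])

variable (hiso : ∀ s : Finset ι,
  min (μ.real (U ∩ ⋃ i ∈ s, E i)) (μ.real (U \ ⋃ i ∈ s, E i)) ≤ K)
include hiso

lemma measureReal_inter_biUnion_le_or_exists_lt [DecidableEq ι] (hK : 3 * K < μ.real U)
    (s : Finset ι) : μ.real (U ∩ ⋃ i ∈ s, E i) ≤ K ∨ ∃ i ∈ s, K < μ.real (U ∩ E i) := by
  induction s using Finset.induction_on with
  | empty =>
    have h := hiso ∅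
    simp only [Finset.notMem_empty, Set.iUnion_of_empty, Set.iUnion_empty, Set.inter_empty,
      Set.sdiff_empty, measureReal_empty] at h ⊢
    exact .inl ((le_min le_rfl measureReal_nonneg).trans h)
  | insert a s _ ih =>
    rcases ih with hs | ⟨i, hi, hlt⟩
    · refine (measureReal_inter_le_or_sub_le_of_min_le (hiso (insert a s))).imp id
        fun hlarge => ⟨a, Finset.mem_insert_self a s, ?_⟩
      have hsplit : μ.real (U ∩ ⋃ i ∈ insert a s, E i)
          ≤ μ.real (U ∩ E a) + μ.real (U ∩ ⋃ i ∈ s, E i) := by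
        rw [Finset.set_biUnion_insert, Set.inter_union_distrib_left]
        exact measureReal_union_le _ _
      linarith
    · exact .inr ⟨i, Finset.mem_insert_of_mem hi, hlt⟩

lemma exists_lt_measureReal_inter [Finite ι] (hK : 3 * K < μ.real U)
    (hfull : μ (U \ ⋃ i, E i) = 0) : ∃ i, K < μ.real (U ∩ E i) := by
  classical
  have := Fintype.ofFinite ι
  have hcover : μ.real U ≤ μ.real (U ∩ ⋃ i ∈ Finset.univ, E i) := by
    simpa [measureReal_def, hfull] using measureReal_le_inter_add_sdiff μ U (⋃ i, E i)
  rcases measureReal_inter_biUnion_le_or_exists_lt hiso hK Finset.univ with hsmall | ⟨i, -, hi⟩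
  · linarith [measureReal_nonneg (μ := μ) (s := U)]
  · exact ⟨i, hi⟩

theorem existsUnique_measureReal_sdiff_le [Finite ι] (hU : μ U ≠ ⊤)
    (hdisj : Pairwise (Function.onFun Disjoint E)) (hK : 3 * K < μ.real U)
    (hfull : μ (U \ ⋃ i, E i) = 0) : ∃! i, μ.real (U \ E i) ≤ K := by
  obtain ⟨i, hi⟩ := exists_lt_measureReal_inter hiso hK hfull
  have hsingle := hiso {i}
  simp only [Finset.mem_singleton, Set.iUnion_iUnion_eq_left] at hsingle
  refine ⟨i, (min_le_iff.mp hsingle).resolve_left hi.not_ge, fun j hj => ?_⟩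
  by_contra hji
  have hsub : U ∩ E i ⊆ U \ E j := fun x hx => ⟨hx.1, (hdisj hji).symm.notMem_of_mem_left hx.2⟩
  linarith [measureReal_mono hsub (ne_top_of_le_ne_top hU (measure_mono Set.sdiff_subset))]

end Isoperimetric

lemma mul_rpow_le_of_le_rpow_inv {B C D W p : ℝ} (hB : 0 ≤ B) (hC : 0 < C) (hD : 0 < D)
    (hW : 0 ≤ W) (hp : 0 < p) (h : B ≤ (W / (D * C)) ^ p⁻¹) : C * B ^ p ≤ D⁻¹ * W := by
  calc C * B ^ p ≤ C * (W / (D * C)) := by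
        gcongr
        exact (Real.le_rpow_inv_iff_of_pos hB (by positivity) hp).1 h
    _ = D⁻¹ * W := by field_simp

theorem stmt_9_general {n N : ℕ} (hn : 1 ≤ n) (R C : ℝ) (hR : 0 < R) (hC : 0 < C)
    (Es : Fin N → Set (EuclideanSpace ℝ (Fin (n+1))))
    (U : Set (EuclideanSpace ℝ (Fin (n+1))))
    (hU : U = Metric.ball (0 : EuclideanSpace ℝ (Fin (n+1))) R)
    (B : ℝ) (hB : B = (μH[(n:ℝ)] (U ∩ ⋃ i, frontier (Es i))).toReal)
    (hdisj : Pairwise (Function.onFun Disjoint Es))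
    (hfull : volume (U \ ⋃ i, Es i) = 0)
    (hiso : ∀ s : Finset (Fin N),
      min (volume (U ∩ ⋃ i ∈ s, Es i)).toReal (volume (U \ ⋃ i ∈ s, Es i)).toReal
        ≤ C * B ^ (((n:ℝ)+1)/(n:ℝ)))
    (hsmall : B ≤ ((volume U).toReal / (2^(n+2) * C)) ^ ((n:ℝ)/((n:ℝ)+1))) :
    C * B ^ (((n:ℝ)+1)/(n:ℝ)) ≤ (2:ℝ) ^ (-((n:ℝ)+2)) * (volume U).toReal
      ∧ ∃! i₀ : Fin N, (volume (U \ Es i₀)).toReal ≤ C * B ^ (((n:ℝ)+1)/(n:ℝ)) := by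
  have hUfin : volume U ≠ ⊤ := hU ▸ measure_ball_lt_top.ne
  have hUpos : 0 < (volume U).toReal :=
    ENNReal.toReal_pos (hU ▸ (Metric.measure_ball_pos volume 0 hR).ne') hUfin
  have hn' : (0 : ℝ) < n := by exact_mod_cast hn
  have hpow : (2 : ℝ) ^ (-((n : ℝ) + 2)) = ((2 : ℝ) ^ (n + 2))⁻¹ := by
    rw [Real.rpow_neg zero_le_two]
    norm_cast
  have hK : C * B ^ (((n:ℝ)+1)/(n:ℝ)) ≤ (2:ℝ) ^ (-((n:ℝ)+2)) * (volume U).toReal := by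
    rw [hpow]
    refine mul_rpow_le_of_le_rpow_inv (hB ▸ ENNReal.toReal_nonneg) hC (by positivity)
      ENNReal.toReal_nonneg (by positivity) ?_
    rwa [inv_div]
  have hquarter : (2 : ℝ) ^ (-((n : ℝ) + 2)) ≤ 1 / 4 := by
    rw [hpow, one_div]
    gcongr
    rw [pow_add]
    norm_num
    exact one_le_pow₀ one_le_two
  refine ⟨hK, existsUnique_measureReal_sdiff_le hiso hUfin hdisj ?_ hfull⟩
  rw [measureReal_def]
  nlinarith [mul_le_mul_of_nonneg_right hquarter hUpos.le]

/-- If `E₁,…,E_N` are mutually disjoint open sets filling the ball `U_R` up to Lebesgue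
measure zero, every finite union of them satisfies the relative isoperimetric inequality
with perimeter controlled by `B := H^n(U_R ∩ ⋃ ∂E_i)`, and `B` is small compared to the
volume of the ball, then `C B^{(n+1)/n} ≤ 2^{-(n+2)} |U_R|` and there is a unique index
`i₀` with `|U_R \ E_{i₀}| ≤ C B^{(n+1)/n}`. -/
theorem stmt_9 {n N : ℕ} (hn : 1 ≤ n) (hN : 0 < N) (R C : ℝ) (hR : 0 < R) (hC : 0 < C)
    (Es : Fin N → Set (EuclideanSpace ℝ (Fin (n+1))))
    (U : Set (EuclideanSpace ℝ (Fin (n+1))))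
    (hU : U = Metric.ball (0 : EuclideanSpace ℝ (Fin (n+1))) R)
    (B : ℝ) (hB : B = (μH[(n:ℝ)] (U ∩ ⋃ i, frontier (Es i))).toReal)
    (hopen : ∀ i, IsOpen (Es i))
    (hdisj : Pairwise (Function.onFun Disjoint Es))
    (hfull : volume (U \ ⋃ i, Es i) = 0)
    (hHfin : μH[(n:ℝ)] (U ∩ ⋃ i, frontier (Es i)) ≠ ⊤)
    (hiso : ∀ s : Finset (Fin N),
      min (volume (U ∩ ⋃ i ∈ s, Es i)).toReal (volume (U \ ⋃ i ∈ s, Es i)).toReal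
        ≤ C * B ^ (((n:ℝ)+1)/(n:ℝ)))
    (hsmall : B ≤ ((volume U).toReal / (2^(n+2) * C)) ^ ((n:ℝ)/((n:ℝ)+1))) :
    C * B ^ (((n:ℝ)+1)/(n:ℝ)) ≤ (2:ℝ) ^ (-((n:ℝ)+2)) * (volume U).toReal
      ∧ ∃! i₀ : Fin N, (volume (U \ Es i₀)).toReal ≤ C * B ^ (((n:ℝ)+1)/(n:ℝ)) :=
  stmt_9_general hn R C hR hC Es U hU B hB hdisj hfull hiso hsmall
end

section
/- Let V be an n-varifold on ℝ^{n+1} with first variation δV, let T ∈ G(n+1,n), and let f : ℝ^{n+1} → ℝ^{n+1} be Lipschitz. Suppose V is supported (in its Grassmannian component) so that at V-a.e. (x,S) the differential ∇f(x) annihilates a unit direction v₁ ∈ T: ∇_{v₁} f(x) = 0. Then for V-a.e. (x,S), the Jacobian satisfies |Λ_n ∇f(x) ∘ S|² = (u_{1,n+1})² · det[((∇f)ᵀ ∘ ∇f)_{2≤i,j≤n+1}], where u_{n+1} is a unit normal to S and u_{1,n+1} is its component in the v₁ direction; in particular |Λ_n ∇f(x)∘S| ≤ ‖S − T‖ ·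 ∏_{j=2}^{n+1} |∇_{v_j} f(x)|, where v₂,…,v_{n+1} complete v₁ to an orthonormal basis. -/
open MeasureTheory

/-- Orthogonal projection of `ℝ^{n+1}` onto the hyperplane orthogonal to `w`. -/
noncomputable def projPerp {n : ℕ} (w : EuclideanSpace ℝ (Fin (n+1))) :
    EuclideanSpace ℝ (Fin (n+1)) →L[ℝ] EuclideanSpace ℝ (Fin (n+1)) :=
  ((ℝ ∙ w)ᗮ).subtypeL ∘L Submodule.orthogonalProjectionOnto (ℝ ∙ w)ᗮ

/-!
Since `∇f(x) v₁ = 0`, the map `∇f(x)` only sees the coordinates `2, …, n+1`, so the Gram matrix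
of `∇f(x) b₁, …, ∇f(x) bₙ` is `M G Mᵀ`, where `G` is the Gram matrix of
`∇f(x) v₂, …, ∇f(x) v_{n+1}` and `M` is the minor of the orthogonal coordinate matrix of `b`
obtained by deleting its last row and first column. For an orthogonal matrix this minor has
determinant `±` the complementary entry `b_{n+1,1} = u_{1,n+1}`. Evaluating the difference of the
two projections at `v₁` gives `|u_{1,n+1}| ≤ ‖S − T‖`, and Hadamard's inequality
`det G ≤ ∏ ‖∇f(x) v_j‖²` completes the bound. All of this holds at every point, hence `V`-a.e.
-/

open Matrix

section Gram

variable {E : Type*} [NormedAddCommGroup E] [InnerProductSpace ℝ E] {ι : Type*}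

theorem Matrix.gram_sum_smul {κ : Type*} [Fintype κ] (M : Matrix ι κ ℝ) (w : κ → E) :
    gram ℝ (fun i => ∑ k, M i k • w k) = M * gram ℝ w * Mᵀ := by
  ext i j
  simp only [gram_apply, mul_apply, transpose_apply, sum_inner, inner_sum, real_inner_smul_left,
    real_inner_smul_right, Finset.sum_mul]
  refine Finset.sum_congr rfl fun k _ => Finset.sum_congr rfl fun l _ => ?_
  rw [real_inner_comm]
  ring

variable [Fintype ι] [DecidableEq ι]

theorem Matrix.det_gram_le_one_of_forall_norm_eq_one (u : ι → E) (hu : ∀ i, ‖u i‖ = 1) :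
    (gram ℝ u).det ≤ 1 := by
  have hpsd := posSemidef_gram ℝ u
  set μ := hpsd.isHermitian.eigenvalues
  have hsum : ∑ i, μ i = Fintype.card ι := by
    have htr := hpsd.isHermitian.trace_eq_sum_eigenvalues
    simp only [trace, diag_apply, gram_apply, real_inner_self_eq_norm_sq, hu, one_pow,
      Finset.sum_const, Finset.card_univ, nsmul_eq_mul, mul_one, RCLike.ofReal_real_eq_id,
      id_eq] at htr
    exact htr.symm
  -- `x ≤ exp (x - 1)` turns the product of the eigenvalues into `exp (trace - card ι) = 1`.
  calc (gram ℝ u).det = ∏ i, μ i := by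
        simpa using hpsd.isHermitian.det_eq_prod_eigenvalues
    _ ≤ ∏ i, Real.exp (μ i - 1) :=
        Finset.prod_le_prod (fun i _ => hpsd.eigenvalues_nonneg i)
          fun i _ => by linarith [Real.add_one_le_exp (μ i - 1)]
    _ = 1 := by
        rw [← Real.exp_sum, Finset.sum_sub_distrib, hsum]
        simp

theorem Matrix.det_gram_le_prod_norm_sq (v : ι → E) :
    (gram ℝ v).det ≤ ∏ i, ‖v i‖ ^ 2 := by
  by_cases hv : ∃ i, v i = 0
  · obtain ⟨i, hi⟩ := hv
    rw [det_eq_zero_of_row_eq_zero i fun j => by simp [hi]]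
    exact Finset.prod_nonneg fun i _ => by positivity
  push Not at hv
  set c : ι → ℝ := fun i => ‖v i‖
  have hc : ∀ i, c i ≠ 0 := fun i => norm_ne_zero_iff.mpr (hv i)
  set u : ι → E := fun i => (c i)⁻¹ • v i
  have hu : ∀ i, ‖u i‖ = 1 := fun i => by
    simp only [u, norm_smul, norm_inv, norm_norm, c]
    exact inv_mul_cancel₀ (hc i)
  have hscale : gram ℝ v = diagonal c * gram ℝ u * diagonal c := by
    ext i j
    simp only [mul_diagonal, diagonal_mul, gram_apply, u, real_inner_smul_left,
      real_inner_smul_right]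
    field_simp [hc i, hc j]
  have hc_nonneg : 0 ≤ ∏ i, c i := Finset.prod_nonneg fun i _ => norm_nonneg _
  calc (gram ℝ v).det = (∏ i, c i) ^ 2 * (gram ℝ u).det := by
        rw [hscale, det_mul, det_mul, det_diagonal]; ring
    _ ≤ (∏ i, c i) ^ 2 * 1 := by
        gcongr
        exact det_gram_le_one_of_forall_norm_eq_one u hu
    _ = ∏ i, ‖v i‖ ^ 2 := by rw [mul_one, Finset.prod_pow]

theorem Matrix.sqrt_det_gram_le_prod_norm (v : ι → E) :
    √(gram ℝ v).det ≤ ∏ i, ‖v i‖ := by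
  rw [Real.sqrt_le_left (Finset.prod_nonneg fun i _ => norm_nonneg _), ← Finset.prod_pow]
  exact det_gram_le_prod_norm_sq v

end Gram

theorem Matrix.sq_det_submatrix_castSucc_succ {n : ℕ} {U : Matrix (Fin (n + 1)) (Fin (n + 1)) ℝ}
    (hU : U ∈ orthogonalGroup (Fin (n + 1)) ℝ) :
    (U.submatrix Fin.castSucc Fin.succ).det ^ 2 = U (Fin.last n) 0 ^ 2 := by
  set M := U.submatrix Fin.castSucc Fin.succ
  set c : Fin n → ℝ := fun i => U i.castSucc 0
  have hrows : U * Uᵀ = 1 := (mem_orthogonalGroup_iff _ ℝ).mp hU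
  have hcol : Uᵀ * U = 1 := (mem_orthogonalGroup_iff' _ ℝ).mp hU
  -- Removing the first column from the orthonormal rows leaves a rank-one perturbation of `1`.
  have hMMt : M * Mᵀ = 1 + replicateCol Unit (-c) * replicateRow Unit c := by
    ext i j
    have hij := congr_fun₂ hrows i.castSucc j.castSucc
    simp only [mul_apply, transpose_apply, Fin.sum_univ_succ, one_apply,
      Fin.castSucc_inj] at hij
    simp only [M, c, add_apply, mul_apply, transpose_apply, submatrix_apply, one_apply,
      replicateCol_apply, replicateRow_apply, Pi.neg_apply, Finset.univ_unique,
      Finset.sum_singleton]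
    linarith
  have hc : ∑ i, c i ^ 2 + U (Fin.last n) 0 ^ 2 = 1 := by
    have h00 := congr_fun₂ hcol 0 0
    simp only [mul_apply, transpose_apply, Fin.sum_univ_castSucc, one_apply_eq] at h00
    simpa only [c, sq] using h00
  calc M.det ^ 2 = (M * Mᵀ).det := by rw [det_mul, det_transpose, sq]
    _ = 1 - ∑ i, c i ^ 2 := by
        rw [hMMt, det_one_add_replicateCol_mul_replicateRow]
        simp only [dotProduct, Pi.neg_apply, mul_neg, Finset.sum_neg_distrib, sq]
        ring
    _ = U (Fin.last n) 0 ^ 2 := by linarith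

theorem OrthonormalBasis.coordMatrix_mem_orthogonalGroup {ι : Type*} [Fintype ι] [DecidableEq ι]
    (b : OrthonormalBasis ι ℝ (EuclideanSpace ℝ ι)) :
    (of fun i j => b i j) ∈ orthogonalGroup ι ℝ := by
  have h := (EuclideanSpace.basisFun ι ℝ).toMatrix_orthonormalBasis_mem_orthogonal b
  convert transpose_mem_unitaryGroup_iff.mpr h using 1
  ext i j
  simp [Module.Basis.toMatrix_apply]

theorem projPerp_apply {n : ℕ} {w : EuclideanSpace ℝ (Fin (n + 1))} (hw : ‖w‖ = 1)
    (x : EuclideanSpace ℝ (Fin (n + 1))) :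
    projPerp w x = x - inner ℝ w x • w := by
  rw [← Submodule.starProjection_unit_singleton ℝ hw x]
  exact congrArg Subtype.val (Submodule.orthogonalProjectionOnto_orthogonal x)

theorem abs_inner_le_norm_projPerp_sub {n : ℕ} {ν e x : EuclideanSpace ℝ (Fin (n + 1))}
    (hν : ‖ν‖ = 1) (he : ‖e‖ = 1) (hx : ‖x‖ = 1) (hex : inner ℝ e x = 0) :
    |inner ℝ ν x| ≤ ‖projPerp ν - projPerp e‖ := by
  have hPx : (projPerp ν - projPerp e) x = -(inner ℝ ν x • ν) := by
    rw [_root_.sub_apply, projPerp_apply hν, projPerp_apply he, hex, zero_smul]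
    abel
  calc |inner ℝ ν x| = ‖(projPerp ν - projPerp e) x‖ := by
        rw [hPx, norm_neg, norm_smul, hν, mul_one, Real.norm_eq_abs]
    _ ≤ ‖projPerp ν - projPerp e‖ * ‖x‖ := ContinuousLinearMap.le_opNorm _ _
    _ = ‖projPerp ν - projPerp e‖ := by rw [hx, mul_one]

theorem LinearMap.apply_eq_sum_succ_of_map_single_zero {n : ℕ} {F : Type*} [AddCommGroup F]
    [Module ℝ F] {D : EuclideanSpace ℝ (Fin (n + 1)) →ₗ[ℝ] F}
    (hD : D (EuclideanSpace.single 0 1) = 0) (x : EuclideanSpace ℝ (Fin (n + 1))) :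
    D x = ∑ k : Fin n, x k.succ • D (EuclideanSpace.single k.succ 1) := by
  conv_lhs => rw [← (EuclideanSpace.basisFun (Fin (n + 1)) ℝ).sum_repr x]
  simp [Fin.sum_univ_succ, hD]

theorem det_gram_map_orthonormalBasis_castSucc {n : ℕ} {F : Type*} [NormedAddCommGroup F]
    [InnerProductSpace ℝ F] {D : EuclideanSpace ℝ (Fin (n + 1)) →ₗ[ℝ] F}
    (hD : D (EuclideanSpace.single 0 1) = 0)
    (b : OrthonormalBasis (Fin (n + 1)) ℝ (EuclideanSpace ℝ (Fin (n + 1)))) :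
    (gram ℝ fun i : Fin n => D (b i.castSucc)).det
      = inner ℝ (b (Fin.last n)) (EuclideanSpace.single 0 1) ^ 2
        * (gram ℝ fun j : Fin n => D (EuclideanSpace.single j.succ 1)).det := by
  set U : Matrix (Fin (n + 1)) (Fin (n + 1)) ℝ := of fun i j => b i j
  set M := U.submatrix Fin.castSucc Fin.succ
  have hDb : (fun i : Fin n => D (b i.castSucc))
      = fun i => ∑ k, M i k • D (EuclideanSpace.single k.succ 1) :=
    funext fun i => D.apply_eq_sum_succ_of_map_single_zero hD _
  have hM : M.det ^ 2 = b (Fin.last n) 0 ^ 2 :=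
    sq_det_submatrix_castSucc_succ b.coordMatrix_mem_orthogonalGroup
  rw [hDb, gram_sum_smul, det_mul, det_mul, det_transpose, EuclideanSpace.inner_single_right,
    conj_trivial, one_mul, ← hM]
  ring

theorem sqrt_det_gram_map_orthonormalBasis_castSucc_le {n : ℕ} (hn : 1 ≤ n) {F : Type*}
    [NormedAddCommGroup F] [InnerProductSpace ℝ F] {D : EuclideanSpace ℝ (Fin (n + 1)) →ₗ[ℝ] F}
    (hD : D (EuclideanSpace.single 0 1) = 0)
    (b : OrthonormalBasis (Fin (n + 1)) ℝ (EuclideanSpace ℝ (Fin (n + 1)))) :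
    √(gram ℝ fun i : Fin n => D (b i.castSucc)).det
      ≤ ‖projPerp (b (Fin.last n)) - projPerp (EuclideanSpace.single (Fin.last n) 1)‖
        * ∏ j : Fin n, ‖D (EuclideanSpace.single j.succ 1)‖ := by
  have hlast : Fin.last n ≠ 0 := Fin.pos_iff_ne_zero.mp hn
  have hnormal : |inner ℝ (b (Fin.last n)) (EuclideanSpace.single 0 1)|
      ≤ ‖projPerp (b (Fin.last n)) - projPerp (EuclideanSpace.single (Fin.last n) 1)‖ :=
    abs_inner_le_norm_projPerp_sub (b.orthonormal.1 _) (by simp) (by simp)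
      (by simp [EuclideanSpace.inner_single_right, hlast])
  rw [det_gram_map_orthonormalBasis_castSucc hD, Real.sqrt_mul (sq_nonneg _), Real.sqrt_sq_eq_abs]
  exact mul_le_mul hnormal (sqrt_det_gram_le_prod_norm _) (Real.sqrt_nonneg _) (norm_nonneg _)

theorem stmt_15_general {n : ℕ} (hn : 1 ≤ n)
    [MeasurableSpace (EuclideanSpace ℝ (Fin (n+1)) →L[ℝ] EuclideanSpace ℝ (Fin (n+1)))]
    (V : Measure (EuclideanSpace ℝ (Fin (n+1)) ×
      (EuclideanSpace ℝ (Fin (n+1)) →L[ℝ] EuclideanSpace ℝ (Fin (n+1)))))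
    (f : EuclideanSpace ℝ (Fin (n+1)) → EuclideanSpace ℝ (Fin (n+1))) :
    ∀ᵐ p ∂V, ∀ b : OrthonormalBasis (Fin (n+1)) ℝ (EuclideanSpace ℝ (Fin (n+1))),
      p.2 = projPerp (b (Fin.last n)) →
      fderiv ℝ f p.1 (EuclideanSpace.single 0 1) = 0 →
      (Matrix.det (Matrix.of fun i j : Fin n =>
          (inner ℝ (fderiv ℝ f p.1 (b i.castSucc)) (fderiv ℝ f p.1 (b j.castSucc)) : ℝ))
        = (inner ℝ (b (Fin.last n)) (EuclideanSpace.single (0 : Fin (n+1)) (1:ℝ)) : ℝ)^2 *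
          Matrix.det (Matrix.of fun i j : Fin n =>
            (inner ℝ (fderiv ℝ f p.1 (EuclideanSpace.single i.succ 1))
              (fderiv ℝ f p.1 (EuclideanSpace.single j.succ 1)) : ℝ)))
      ∧ Real.sqrt (Matrix.det (Matrix.of fun i j : Fin n =>
            (inner ℝ (fderiv ℝ f p.1 (b i.castSucc)) (fderiv ℝ f p.1 (b j.castSucc)) : ℝ)))
          ≤ ‖p.2 - projPerp (EuclideanSpace.single (Fin.last n) (1:ℝ))‖
            * ∏ j : Fin n, ‖fderiv ℝ f p.1 (EuclideanSpace.single j.succ (1:ℝ))‖ := by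
  refine Filter.Eventually.of_forall fun p b hb hD => ?_
  rw [hb]
  exact ⟨det_gram_map_orthonormalBasis_castSucc (D := (fderiv ℝ f p.1).toLinearMap) hD b,
    sqrt_det_gram_map_orthonormalBasis_castSucc_le hn (D := (fderiv ℝ f p.1).toLinearMap) hD b⟩

/-- Binet–Cauchy factorization of the `n`-Jacobian: if `V` is an `n`-varifold and `f` is
Lipschitz with `∇f(x) v₁ = 0` (`v₁` the first coordinate direction, lying in the
reference plane `T = {x_{n+1} = 0}`), then `V`-a.e., for any orthonormal basis `b` with
`S` the span of `b₁,…,b_n` and `b_{n+1}` the unit normal,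
`|Λ_n ∇f(x)∘S|² = (u_{1,n+1})² det[((∇f)ᵀ∇f)_{2≤i,j≤n+1}]` and consequently
`|Λ_n ∇f(x)∘S| ≤ ‖S − T‖ ∏_{j=2}^{n+1} |∇_{v_j} f(x)|`. -/
theorem stmt_15 {n : ℕ} (hn : 1 ≤ n)
    [MeasurableSpace (EuclideanSpace ℝ (Fin (n+1)) →L[ℝ] EuclideanSpace ℝ (Fin (n+1)))]
    (V : Measure (EuclideanSpace ℝ (Fin (n+1)) ×
      (EuclideanSpace ℝ (Fin (n+1)) →L[ℝ] EuclideanSpace ℝ (Fin (n+1)))))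
    (f : EuclideanSpace ℝ (Fin (n+1)) → EuclideanSpace ℝ (Fin (n+1)))
    (K : NNReal) (hf : LipschitzWith K f)
    (hae : ∀ᵐ p ∂V, fderiv ℝ f p.1 (EuclideanSpace.single 0 1) = 0 ∧
      ∃ b : OrthonormalBasis (Fin (n+1)) ℝ (EuclideanSpace ℝ (Fin (n+1))),
        p.2 = projPerp (b (Fin.last n))) :
    ∀ᵐ p ∂V, ∀ b : OrthonormalBasis (Fin (n+1)) ℝ (EuclideanSpace ℝ (Fin (n+1))),
      p.2 = projPerp (b (Fin.last n)) →
      fderiv ℝ f p.1 (EuclideanSpace.single 0 1) = 0 →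
      (Matrix.det (Matrix.of fun i j : Fin n =>
          (inner ℝ (fderiv ℝ f p.1 (b i.castSucc)) (fderiv ℝ f p.1 (b j.castSucc)) : ℝ))
        = (inner ℝ (b (Fin.last n)) (EuclideanSpace.single (0 : Fin (n+1)) (1:ℝ)) : ℝ)^2 *
          Matrix.det (Matrix.of fun i j : Fin n =>
            (inner ℝ (fderiv ℝ f p.1 (EuclideanSpace.single i.succ 1))
              (fderiv ℝ f p.1 (EuclideanSpace.single j.succ 1)) : ℝ)))
      ∧ Real.sqrt (Matrix.det (Matrix.of fun i j : Fin n =>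
            (inner ℝ (fderiv ℝ f p.1 (b i.castSucc)) (fderiv ℝ f p.1 (b j.castSucc)) : ℝ)))
          ≤ ‖p.2 - projPerp (EuclideanSpace.single (Fin.last n) (1:ℝ))‖
            * ∏ j : Fin n, ‖fderiv ℝ f p.1 (EuclideanSpace.single j.succ (1:ℝ))‖ :=
  stmt_15_general hn V f
end
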